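/- arXiv:1405.4929 — 3 statements merged into one kernel-verified Lean document; each statement's English description precedes it below -/
import Mathlib

section
/- For all relations P = (A,B,R) and Q = (C,B,T), the games G(P,Q) and G_1(Dom(P), Dom(Q)) are dual: ONE has a winning strategy in G(P,Q) if and only if TWO has a winning strategy in G_1(Dom(P), Dom(Q)), and TWO has a winning strategy in G(P,Q) if and only if ONE has a winning strategy in G_1(Dom(P), Dom(Q)). -/
open Set

/-- `GDom R` is the set of dominating families of the relation `R`:
sets `Z ⊆ B` such that every `a ∈ A` is dominated by some `b ∈ Z`. -/
def GDom {α β : Type*} (R : α → β → Prop) : Set (Set β) :=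
  {Z | ∀ a : α, ∃ b ∈ Z, R a b}

/-- A relation is total: every element of the domain is dominated by something. -/
def IsTotalRel {α β : Type*} (R : α → β → Prop) : Prop :=
  ∀ a : α, ∃ b : β, R a b

/-- The product of two relations. -/
def GProd {α β α' β' : Type*} (R : α → β → Prop) (R' : α' → β' → Prop) :
    α × α' → β × β' → Prop :=
  fun a b => R a.1 b.1 ∧ R' a.2 b.2

/-- The finite history consisting of the first `n` moves of the sequence `b`. -/
def GHist {β : Type*} (b : ℕ → β) (n : ℕ) : List β :=
  List.ofFn fun i : Fin n => b i

/-- ONE has a winning strategy in the game `G(P,Q)`: in inning `n` ONE plays `aₙ ∈ A`,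
TWO answers `bₙ` with `R aₙ bₙ`; ONE wins iff `{bₙ : n} ∈ GDom T`. -/
def OneWinsG {α β γ : Type*} (R : α → β → Prop) (T : γ → β → Prop) : Prop :=
  ∃ σ : List β → α, ∀ b : ℕ → β,
    (∀ n, R (σ (GHist b n)) (b n)) → Set.range b ∈ GDom T

/-- TWO has a winning strategy in the game `G(P,Q)`. -/
def TwoWinsG {α β γ : Type*} (R : α → β → Prop) (T : γ → β → Prop) : Prop :=
  ∃ τ : List α → β, ∀ a : ℕ → α,
    (∀ n, R (a n) (τ (GHist a (n + 1)))) ∧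
    Set.range (fun n => τ (GHist a (n + 1))) ∉ GDom T

/-- ONE has a winning strategy in the game `G₁(𝒜,ℬ)`: in inning `n` ONE plays `Aₙ ∈ 𝒜`,
TWO answers `bₙ ∈ Aₙ`; TWO wins iff `{bₙ : n} ∈ ℬ`. -/
def OneWinsG1 {β : Type*} (𝒜 ℬ : Set (Set β)) : Prop :=
  ∃ σ : List β → Set β, (∀ h, σ h ∈ 𝒜) ∧
    ∀ b : ℕ → β, (∀ n, b n ∈ σ (GHist b n)) → Set.range b ∉ ℬ

/-- TWO has a winning strategy in the game `G₁(𝒜,ℬ)`. -/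
def TwoWinsG1 {β : Type*} (𝒜 ℬ : Set (Set β)) : Prop :=
  ∃ τ : List (Set β) → β, ∀ S : ℕ → Set β, (∀ n, S n ∈ 𝒜) →
    (∀ n, τ (GHist S (n + 1)) ∈ S n) ∧
    Set.range (fun n => τ (GHist S (n + 1))) ∈ ℬ

/-- TWO has a winning strategy in the game `G_fin(𝒜,ℬ)`: in inning `n` ONE plays `Aₙ ∈ 𝒜`,
TWO answers a finite `Fₙ ⊆ Aₙ`; TWO wins iff `⋃ₙ Fₙ ∈ ℬ`. -/
def TwoWinsGfin {β : Type*} (𝒜 ℬ : Set (Set β)) : Prop :=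
  ∃ τ : List (Set β) → Set β, ∀ S : ℕ → Set β, (∀ n, S n ∈ 𝒜) →
    (∀ n, τ (GHist S (n + 1)) ⊆ S n ∧ (τ (GHist S (n + 1))).Finite) ∧
    (⋃ n, τ (GHist S (n + 1))) ∈ ℬ

/-- `(𝒜,ℬ)`-Lindelöf: every member of `𝒜` has a countable subset belonging to `ℬ`. -/
def LindelofFam {β : Type*} (𝒜 ℬ : Set (Set β)) : Prop :=
  ∀ S ∈ 𝒜, ∃ C ⊆ S, C.Countable ∧ C ∈ ℬ

/-- The selection principle `S₁(𝒜,ℬ)`. -/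
def SelS1 {β : Type*} (𝒜 ℬ : Set (Set β)) : Prop :=
  ∀ A : ℕ → Set β, (∀ n, A n ∈ 𝒜) →
    ∃ b : ℕ → β, (∀ n, b n ∈ A n) ∧ Set.range b ∈ ℬ

/-- The selection principle `S_fin(𝒜,ℬ)`. -/
def SelSfin {β : Type*} (𝒜 ℬ : Set (Set β)) : Prop :=
  ∀ A : ℕ → Set β, (∀ n, A n ∈ 𝒜) →
    ∃ F : ℕ → Set β, (∀ n, F n ⊆ A n ∧ (F n).Finite) ∧ (⋃ n, F n) ∈ ℬ

/-- `𝒪_X`: the family of open covers of `X`. -/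
def OpenCovers (X : Type*) [TopologicalSpace X] : Set (Set (Set X)) :=
  {𝒰 | (∀ U ∈ 𝒰, IsOpen U) ∧ ⋃₀ 𝒰 = Set.univ}

/-- ONE has a winning strategy in the point-open game on `X`. -/
def OneWinsPointOpen (X : Type*) [TopologicalSpace X] : Prop :=
  ∃ σ : List (Set X) → X, ∀ U : ℕ → Set X,
    (∀ n, IsOpen (U n) ∧ σ (GHist U n) ∈ U n) → Set.range U ∈ OpenCovers X

/-- TWO has a winning strategy in the point-open game on `X`. -/
def TwoWinsPointOpen (X : Type*) [TopologicalSpace X] : Prop :=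
  ∃ τ : List X → Set X, ∀ x : ℕ → X,
    (∀ n, IsOpen (τ (GHist x (n + 1))) ∧ x n ∈ τ (GHist x (n + 1))) ∧
    Set.range (fun n => τ (GHist x (n + 1))) ∉ OpenCovers X

/-- `𝔇_X`: the family of dense subsets of `X`. -/
def DenseSets (X : Type*) [TopologicalSpace X] : Set (Set X) :=
  {D | Dense D}

/-- ONE has a winning strategy in the point-picking game `G^D_ω(X)` of Berner and Juhász. -/
def OneWinsPointPicking (X : Type*) [TopologicalSpace X] : Prop :=
  ∃ σ : List X → Set X, (∀ h, IsOpen (σ h) ∧ (σ h).Nonempty) ∧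
    ∀ x : ℕ → X, (∀ n, x n ∈ σ (GHist x n)) → Dense (Set.range x)

/-- TWO has a winning strategy in the point-picking game `G^D_ω(X)`. -/
def TwoWinsPointPicking (X : Type*) [TopologicalSpace X] : Prop :=
  ∃ τ : List (Set X) → X, ∀ U : ℕ → Set X,
    (∀ n, IsOpen (U n) ∧ (U n).Nonempty) →
    (∀ n, τ (GHist U (n + 1)) ∈ U n) ∧
    ¬ Dense (Set.range fun n => τ (GHist U (n + 1)))

/-- `𝒟_X`: families of open sets whose union is dense in `X`. -/
def DenseUnionFams (X : Type*) [TopologicalSpace X] : Set (Set (Set X)) :=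
  {𝒰 | (∀ U ∈ 𝒰, IsOpen U) ∧ Dense (⋃₀ 𝒰)}

/-- ONE has a winning strategy in Tkachuk's game `θ(X)`. -/
def OneWinsTheta (X : Type*) [TopologicalSpace X] : Prop :=
  ∃ σ : List (Set X) → X, ∀ U : ℕ → Set X,
    (∀ n, IsOpen (U n) ∧ σ (GHist U n) ∈ U n) → Dense (⋃ n, U n)

/-- TWO has a winning strategy in Tkachuk's game `θ(X)`. -/
def TwoWinsTheta (X : Type*) [TopologicalSpace X] : Prop :=
  ∃ τ : List X → Set X, ∀ x : ℕ → X,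
    (∀ n, IsOpen (τ (GHist x (n + 1))) ∧ x n ∈ τ (GHist x (n + 1))) ∧
    ¬ Dense (⋃ n, τ (GHist x (n + 1)))

/-- `Ω_x`: the family of subsets of `X` having `x` in their closure. -/
def OmegaPt {X : Type*} [TopologicalSpace X] (x : X) : Set (Set X) :=
  {A | x ∈ closure A}

/-- ONE has a winning strategy in Gruenhage's game `G^c_{O,P}(X,x)`. -/
def OneWinsGruenhage {X : Type*} [TopologicalSpace X] (x : X) : Prop :=
  ∃ σ : List X → Set X, (∀ h, IsOpen (σ h) ∧ x ∈ σ h) ∧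
    ∀ y : ℕ → X, (∀ n, y n ∈ σ (GHist y n)) → x ∈ closure (Set.range y)

/-- TWO has a winning strategy in Gruenhage's game `G^c_{O,P}(X,x)`. -/
def TwoWinsGruenhage {X : Type*} [TopologicalSpace X] (x : X) : Prop :=
  ∃ τ : List (Set X) → X, ∀ V : ℕ → Set X,
    (∀ n, IsOpen (V n) ∧ x ∈ V n) →
    (∀ n, τ (GHist V (n + 1)) ∈ V n) ∧
    x ∉ closure (Set.range fun n => τ (GHist V (n + 1)))

/-- ONE has a winning strategy in the compact-open game on `X`. -/
def OneWinsCompactOpen (X : Type*) [TopologicalSpace X] : Prop :=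
  ∃ σ : List (Set X) → Set X, (∀ h, IsCompact (σ h)) ∧
    ∀ U : ℕ → Set X, (∀ n, IsOpen (U n) ∧ σ (GHist U n) ⊆ U n) →
      (⋃ n, U n) = Set.univ

/-- `⪯` is downwards `P`-compatible. -/
def DownwardsCompat {α β : Type*} (R : α → β → Prop) (le : β → β → Prop) : Prop :=
  ∀ a b₁ b₂, R a b₁ → R a b₂ → ∃ b, R a b ∧ le b b₁ ∧ le b b₂

/-- `⪯` is upwards `Q`-compatible. -/
def UpwardsCompat {γ β : Type*} (T : γ → β → Prop) (le : β → β → Prop) : Prop :=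
  ∀ c b₁ b₂, T c b₁ → le b₁ b₂ → T c b₂

/-- `⪯` is countably downwards `P`-compatible. -/
def CountablyDownwardsCompat {α β : Type*} (R : α → β → Prop) (le : β → β → Prop) : Prop :=
  ∀ a, ∀ E : Set β, E.Countable → E.Nonempty → (∀ b ∈ E, R a b) →
    ∃ b', R a b' ∧ ∀ b ∈ E, le b' b

/-- A relation is `ℵ₀`-preserving if some partial order on `B` is both upwards
compatible and countably downwards compatible with it. -/
def Aleph0Preserving {α β : Type*} (R : α → β → Prop) : Prop :=
  ∃ le : β → β → Prop, IsPartialOrder β le ∧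
    UpwardsCompat R le ∧ CountablyDownwardsCompat R le

/-- `Dom_γ(T)`: the γ-dominating sequences of the relation `T`. -/
def GDomGamma {γ β : Type*} (T : γ → β → Prop) : Set (ℕ → β) :=
  {z | ∀ c : γ, {n : ℕ | ¬ T c (z n)}.Finite}

/-- ONE has a winning strategy in the game `G_γ(P,Q)`. -/
def OneWinsGgamma {α β γ : Type*} (R : α → β → Prop) (T : γ → β → Prop) : Prop :=
  ∃ σ : List β → α, ∀ b : ℕ → β,
    (∀ n, R (σ (GHist b n)) (b n)) → b ∈ GDomGamma T

/-- TWO has a winning strategy in the game `G_γ(P,Q)`. -/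
def TwoWinsGgamma {α β γ : Type*} (R : α → β → Prop) (T : γ → β → Prop) : Prop :=
  ∃ τ : List α → β, ∀ a : ℕ → α,
    (∀ n, R (a n) (τ (GHist a (n + 1)))) ∧
    (fun n => τ (GHist a (n + 1))) ∉ GDomGamma T

/-- ONE has a winning strategy in the game `G₁(𝒜, Dom_γ(T))`. -/
def OneWinsG1gamma {β γ : Type*} (𝒜 : Set (Set β)) (T : γ → β → Prop) : Prop :=
  ∃ σ : List β → Set β, (∀ h, σ h ∈ 𝒜) ∧
    ∀ b : ℕ → β, (∀ n, b n ∈ σ (GHist b n)) → b ∉ GDomGamma T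

/-- TWO has a winning strategy in the game `G₁(𝒜, Dom_γ(T))`. -/
def TwoWinsG1gamma {β γ : Type*} (𝒜 : Set (Set β)) (T : γ → β → Prop) : Prop :=
  ∃ τ : List (Set β) → β, ∀ S : ℕ → Set β, (∀ n, S n ∈ 𝒜) →
    (∀ n, τ (GHist S (n + 1)) ∈ S n) ∧
    (fun n => τ (GHist S (n + 1))) ∈ GDomGamma T

/-- The `ℵ₀`-modification of a relation: moves become nonempty countable subsets of `B`,
dominated pointwise. -/
def CountMod {α β : Type*} (R : α → β → Prop) :
    α → {E : Set β // E.Countable ∧ E.Nonempty} → Prop :=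
  fun a E => ∀ b ∈ E.1, R a b

/-!
Both equivalences are strategy translations. A move `A ∈ Dom(P)` of ONE in `G₁` is answered
by TWO with a `b ∈ A`, so a winning strategy in one game turns into a winning strategy for the
opposite player in the other game by replaying the history. The only nontrivial step concerns a
strategy `τ` of TWO in `G₁`: after a history `h` there is some `a ∈ A` all of whose
`R`-successors are answers `τ (h ++ [Z])` with `Z ∈ Dom(P)`, since otherwise the set of
non-answers would itself be a dominating set `W` with `τ (h ++ [W]) ∉ W`. ONE plays such an `a`
in `G(P,Q)` and keeps track of the dominating sets `Z` producing TWO's replies.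
-/

theorem gHist_succ {β : Type*} (b : ℕ → β) (n : ℕ) : GHist b (n + 1) = GHist b n ++ [b n] := by
  simp only [GHist, List.ofFn_succ_last]
  rfl

theorem gHist_getD {β : Type*} (l : List β) (d : β) :
    GHist (fun k => l.getD k d) l.length = l := by
  apply List.ext_getElem <;> simp [GHist]

theorem forall_mem_gHist {β : Type*} {s : Set β} {b : ℕ → β} (hb : ∀ n, b n ∈ s) (n : ℕ) :
    ∀ x ∈ GHist b n, x ∈ s := by
  simp only [GHist, List.mem_ofFn]
  rintro _ ⟨k, rfl⟩
  exact hb k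

/-- Every finite history with moves in `s` is an initial segment of a play with moves in `s`. -/
theorem append_singleton_of_forall_gHist_succ {I O : Type*} {s : Set I} {τ : List I → O}
    {P : I → O → Prop} (hτ : ∀ u : ℕ → I, (∀ n, u n ∈ s) → ∀ n, P (u n) (τ (GHist u (n + 1))))
    {h : List I} (hh : ∀ x ∈ h, x ∈ s) {x : I} (hx : x ∈ s) : P x (τ (h ++ [x])) := by
  have hu : ∀ n, (h ++ [x]).getD n x ∈ s := by
    intro n
    rcases lt_or_ge n (h ++ [x]).length with hn | hn
    · rw [List.getD_eq_getElem _ _ hn]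
      rcases List.mem_append.mp (List.getElem_mem hn) with hm | hm
      · exact hh _ hm
      · rwa [List.mem_singleton.mp hm]
    · rwa [List.getD_eq_default _ _ hn]
  have := hτ _ hu h.length
  rwa [show h.length + 1 = (h ++ [x]).length by simp, gHist_getD,
    List.getD_append_right _ _ _ _ le_rfl, Nat.sub_self, List.getD_cons_zero] at this

section Responses

variable {I O : Type*} (F : List O → I → O)

def responses (l : List I) : List O :=
  l.foldl (fun acc x => acc ++ [F acc x]) []

def responseSeq (u : ℕ → I) (n : ℕ) : O :=
  F (responses F (GHist u n)) (u n)

/-- The strategy answering each move `x` by `F (own earlier answers) x`; the default `d` is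
only returned on the empty history. -/
def lastResponse (d : O) (l : List I) : O :=
  (responses F l).getLastD d

theorem responses_append_singleton (l : List I) (x : I) :
    responses F (l ++ [x]) = responses F l ++ [F (responses F l) x] := by
  simp [responses, List.foldl_append]

theorem responses_gHist (u : ℕ → I) (n : ℕ) :
    responses F (GHist u n) = GHist (responseSeq F u) n := by
  induction n with
  | zero => rfl
  | succ n ih => rw [gHist_succ, gHist_succ, responses_append_singleton, ← ih]; rfl

theorem responseSeq_eq (u : ℕ → I) (n : ℕ) :
    responseSeq F u n = F (GHist (responseSeq F u) n) (u n) := by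
  rw [responseSeq, responses_gHist]

theorem lastResponse_gHist_succ (d : O) (u : ℕ → I) (n : ℕ) :
    lastResponse F d (GHist u (n + 1)) = responseSeq F u n := by
  simp [lastResponse, gHist_succ, responses_append_singleton, responseSeq]

end Responses

section Duality

variable {α β γ : Type*} {R : α → β → Prop} {T : γ → β → Prop}

theorem twoWinsG1_of_oneWinsG [Nonempty β] (h : OneWinsG R T) :
    TwoWinsG1 (GDom R) (GDom T) := by
  obtain ⟨σ, hσ⟩ := h
  let F : List β → Set β → β := fun h S => Classical.epsilon fun b => b ∈ S ∧ R (σ h) b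
  refine ⟨lastResponse F (Classical.arbitrary β), fun S hS => ?_⟩
  have hF : ∀ n, responseSeq F S n ∈ S n ∧
      R (σ (GHist (responseSeq F S) n)) (responseSeq F S n) := by
    intro n
    rw [responseSeq_eq]
    exact Classical.epsilon_spec (hS n _)
  simp only [lastResponse_gHist_succ]
  exact ⟨fun n => (hF n).1, hσ _ fun n => (hF n).2⟩

theorem twoWinsG_of_oneWinsG1 [Nonempty β] (h : OneWinsG1 (GDom R) (GDom T)) :
    TwoWinsG R T := by
  obtain ⟨σ, hσdom, hσ⟩ := h
  let F : List β → α → β := fun h a => Classical.epsilon fun b => b ∈ σ h ∧ R a b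
  refine ⟨lastResponse F (Classical.arbitrary β), fun a => ?_⟩
  have hF : ∀ n, responseSeq F a n ∈ σ (GHist (responseSeq F a) n) ∧
      R (a n) (responseSeq F a n) := by
    intro n
    rw [responseSeq_eq]
    exact Classical.epsilon_spec (hσdom _ (a n))
  simp only [lastResponse_gHist_succ]
  exact ⟨fun n => (hF n).2, hσ _ fun n => (hF n).1⟩

theorem oneWinsG1_of_twoWinsG [Nonempty α] (h : TwoWinsG R T) :
    OneWinsG1 (GDom R) (GDom T) := by
  obtain ⟨τ, hτ⟩ := h
  have hlegal (h : List α) (a : α) : R a (τ (h ++ [a])) :=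
    append_singleton_of_forall_gHist_succ (s := univ) (fun u _ => (hτ u).1)
      (fun _ _ => trivial) (mem_univ a)
  -- ONE recovers from TWO's replies a sequence of moves of a play against `τ`
  let F : List α → β → α := fun h b => Classical.epsilon fun a => τ (h ++ [a]) = b
  refine ⟨fun l => range fun a => τ (responses F l ++ [a]),
    fun l a => ⟨_, ⟨a, rfl⟩, hlegal _ a⟩, fun b hb => ?_⟩
  have hreplay : ∀ n, τ (GHist (responseSeq F b) (n + 1)) = b n := by
    intro n
    have hbn : b n ∈ range fun a => τ (responses F (GHist b n) ++ [a]) := hb n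
    rw [responses_gHist] at hbn
    rw [gHist_succ, responseSeq_eq]
    exact Classical.epsilon_spec hbn
  simpa only [hreplay] using (hτ (responseSeq F b)).2

theorem exists_setOf_subset_image_of_forall_mem {f : Set β → β}
    (hf : ∀ Z ∈ GDom R, f Z ∈ Z) : ∃ a, {b | R a b} ⊆ f '' GDom R := by
  by_contra! h
  have hW : (f '' GDom R)ᶜ ∈ GDom R := fun a =>
    let ⟨b, hab, hb⟩ := not_subset.mp (h a)
    ⟨b, hb, hab⟩
  exact hf _ hW ⟨_, hW, rfl⟩

theorem oneWinsG_of_twoWinsG1 [Nonempty α] (hR : IsTotalRel R)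
    (h : TwoWinsG1 (GDom R) (GDom T)) : OneWinsG R T := by
  classical
  obtain ⟨τ, hτ⟩ := h
  have huniv : univ ∈ GDom R := fun a => let ⟨b, hb⟩ := hR a; ⟨b, mem_univ b, hb⟩
  have hlegal {h : List (Set β)} (hh : ∀ S ∈ h, S ∈ GDom R) (Z : Set β) (hZ : Z ∈ GDom R) :
      τ (h ++ [Z]) ∈ Z :=
    append_singleton_of_forall_gHist_succ (fun S hS => (hτ S hS).1) hh hZ
  -- ONE recovers from TWO's replies the dominating sets producing them against `τ`
  let F : List (Set β) → β → Set β := fun h b =>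
    if hb : b ∈ (fun Z => τ (h ++ [Z])) '' GDom R then hb.choose else univ
  let σ : List β → α := fun l =>
    Classical.epsilon fun a => {b | R a b} ⊆ (fun Z => τ (responses F l ++ [Z])) '' GDom R
  refine ⟨σ, fun b hb => ?_⟩
  have hS : ∀ n, responseSeq F b n ∈ GDom R := by
    intro n
    rw [responseSeq_eq]
    simp only [F]
    split_ifs with hmem
    exacts [hmem.choose_spec.1, huniv]
  have hreplay : ∀ n, τ (GHist (responseSeq F b) (n + 1)) = b n := by
    intro n
    have hσ : {x | R (σ (GHist b n)) x} ⊆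
        (fun Z => τ (responses F (GHist b n) ++ [Z])) '' GDom R := by
      refine Classical.epsilon_spec (p := fun a =>
        {x | R a x} ⊆ (fun Z => τ (responses F (GHist b n) ++ [Z])) '' GDom R) ?_
      rw [responses_gHist]
      exact exists_setOf_subset_image_of_forall_mem (hlegal (forall_mem_gHist hS n))
    have hbn := hσ (hb n)
    rw [responses_gHist] at hbn
    rw [gHist_succ, responseSeq_eq]
    simp only [F, dif_pos hbn]
    exact hbn.choose_spec.2
  simpa only [hreplay] using (hτ _ hS).2

end Duality

theorem statement0_general {α β γ : Type*} [Nonempty α]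
    (R : α → β → Prop) (T : γ → β → Prop)
    (hR : IsTotalRel R) :
    (OneWinsG R T ↔ TwoWinsG1 (GDom R) (GDom T)) ∧
    (TwoWinsG R T ↔ OneWinsG1 (GDom R) (GDom T)) := by
  have : Nonempty β := ⟨(hR (Classical.arbitrary α)).choose⟩
  exact ⟨⟨twoWinsG1_of_oneWinsG, oneWinsG_of_twoWinsG1 hR⟩,
    ⟨oneWinsG1_of_twoWinsG, twoWinsG_of_oneWinsG1⟩⟩

/-- For all relations `P = (A,B,R)` and `Q = (C,B,T)`, the games `G(P,Q)`
and `G₁(Dom(P), Dom(Q))` are dual. -/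
theorem statement0 {α β γ : Type*} [Nonempty α] [Nonempty γ]
    (R : α → β → Prop) (T : γ → β → Prop)
    (hR : IsTotalRel R) (hT : IsTotalRel T) :
    (OneWinsG R T ↔ TwoWinsG1 (GDom R) (GDom T)) ∧
    (TwoWinsG R T ↔ OneWinsG1 (GDom R) (GDom T)) :=
  statement0_general R T hR
end

section
/- For every topological space X, the point-open game on X and the Rothberger game on X are dual games: ONE has a winning strategy in the point-open game if and only if TWO has a winning strategy in the Rothberger game, and TWO has a winning strategy in the point-open game if and only if ONE has a winning strategy in the Rothberger game. -/
/-!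
Strategies are transferred between the two games by simulating a play of the other game.
A winning strategy for ONE in one game yields one for TWO in the other: answering a cover
with a member containing the point that ONE's strategy would play, or a point with a member
containing it of the cover that ONE's strategy would play. TWO's point-open strategy turns into
ONE's Rothberger strategy by playing the cover of all of TWO's possible answers. The hard
direction is Galvin's: if `τ` is TWO's winning Rothberger strategy, then at every stage some
point `x` is such that every open neighbourhood of `x` contains TWO's answer to some open cover;
otherwise the neighbourhoods witnessing the failure would form an open cover on which `τ`
selects a set that is not inside itself. ONE plays such points in the point-open game.
-/

open Set

section Replies

variable {β γ : Type*}

lemma GHist_succ (b : ℕ → β) (n : ℕ) : GHist b (n + 1) = GHist b n ++ [b n] := by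
  rw [GHist, List.ofFn_succ']
  simp [GHist, List.concat_eq_append]

lemma forall_append_singleton_of_forall_GHist {Q : β → Prop} {P : List β → β → Prop}
    (h : ∀ s : ℕ → β, (∀ n, Q (s n)) → ∀ n, P (GHist s n) (s n))
    {l : List β} (hl : ∀ y ∈ l, Q y) {x : β} (hx : Q x) : P l x := by
  set s : ℕ → β := fun k => if hk : k < l.length then l[k] else x
  have hs : ∀ k, Q (s k) := by
    intro k
    by_cases hk : k < l.length
    · simpa [s, hk] using hl _ (List.getElem_mem hk)
    · simpa [s, hk] using hx
  have hhist : GHist s l.length = l := List.ext_getElem (by simp [GHist]) (by simp [GHist, s])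
  simpa [hhist, s] using h s hs l.length

/-- `step r u` is the reply to the move `u` when `r` are the replies made so far. -/
def replies (step : List β → γ → β) (l : List γ) : List β :=
  l.foldl (fun r u => r ++ [step r u]) []

lemma replies_append_singleton (step : List β → γ → β) (l : List γ) (u : γ) :
    replies step (l ++ [u]) = replies step l ++ [step (replies step l) u] := by
  simp [replies]

lemma replies_GHist (step : List β → γ → β) (a : ℕ → γ) (n : ℕ) :
    replies step (GHist a n) = GHist (fun k => step (replies step (GHist a k)) (a k)) n := by
  induction n with
  | zero => rfl
  | succ n ih => rw [GHist_succ, replies_append_singleton, GHist_succ, ← ih]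

/-- A reply rule that may consult one's own previous replies is realised by a strategy that
sees only the opponent's moves. -/
lemma exists_strategy_of_step [Nonempty β] (step : List β → γ → β) :
    ∃ τ : List γ → β, ∀ a : ℕ → γ, ∀ n,
      τ (GHist a (n + 1)) = step (GHist (fun k => τ (GHist a (k + 1))) n) (a n) := by
  refine ⟨fun l => (replies step l).getLastD (Classical.arbitrary β), fun a n => ?_⟩
  have hτ : ∀ k, (replies step (GHist a (k + 1))).getLastD (Classical.arbitrary β) =
      step (replies step (GHist a k)) (a k) := by
    intro k
    rw [GHist_succ, replies_append_singleton, List.getLastD_concat]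
  simp only [hτ]
  rw [replies_GHist]

end Replies

section OpenCovers

variable {X : Type*} [TopologicalSpace X]

lemma empty_mem_openCovers [IsEmpty X] : (∅ : Set (Set X)) ∈ OpenCovers X :=
  ⟨by simp, by simp [univ_eq_empty_iff.2 ‹_›]⟩

lemma exists_selector_openCovers : ∃ pick : Set (Set X) → X → Set X,
    ∀ 𝒰 ∈ OpenCovers X, ∀ x, pick 𝒰 x ∈ 𝒰 ∧ x ∈ pick 𝒰 x := by
  have : ∀ (𝒰 : Set (Set X)) (x : X), ∃ U, 𝒰 ∈ OpenCovers X → U ∈ 𝒰 ∧ x ∈ U := by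
    intro 𝒰 x
    by_cases h𝒰 : 𝒰 ∈ OpenCovers X
    · obtain ⟨U, hU, hxU⟩ := sUnion_eq_univ_iff.1 h𝒰.2 x
      exact ⟨U, fun _ => ⟨hU, hxU⟩⟩
    · exact ⟨∅, fun h => absurd h h𝒰⟩
  choose pick hpick using this
  exact ⟨pick, fun 𝒰 h𝒰 x => hpick 𝒰 x h𝒰⟩

lemma exists_forall_nhd_selector_subset {f : Set (Set X) → Set X}
    (hf : ∀ 𝒰 ∈ OpenCovers X, f 𝒰 ∈ 𝒰) :
    ∃ x, ∀ V, IsOpen V → x ∈ V → ∃ 𝒰 ∈ OpenCovers X, f 𝒰 ⊆ V := by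
  by_contra! hcon
  choose V hVopen hxV hV using hcon
  have hcov : range V ∈ OpenCovers X :=
    ⟨by rintro _ ⟨x, rfl⟩; exact hVopen x,
      sUnion_eq_univ_iff.2 fun x => ⟨V x, ⟨x, rfl⟩, hxV x⟩⟩
  obtain ⟨x, hx⟩ := hf _ hcov
  exact hV x _ hcov hx.ge

lemma exists_point_cover_strategy_subset [Nonempty X] {τ : List (Set (Set X)) → Set X}
    (hτ : ∀ c, (∀ u ∈ c, u ∈ OpenCovers X) → ∀ 𝒰 ∈ OpenCovers X, τ (c ++ [𝒰]) ∈ 𝒰) :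
    ∃ (pt : List (Set (Set X)) → X) (cover : List (Set (Set X)) → Set X → Set (Set X)),
      (∀ c V, cover c V ∈ OpenCovers X) ∧ ∀ c, (∀ u ∈ c, u ∈ OpenCovers X) →
        ∀ V, IsOpen V → pt c ∈ V → τ (c ++ [cover c V]) ⊆ V := by
  have : ∀ c : List (Set (Set X)), ∃ x : X, (∀ u ∈ c, u ∈ OpenCovers X) →
      ∀ V, IsOpen V → x ∈ V → ∃ 𝒰 ∈ OpenCovers X, τ (c ++ [𝒰]) ⊆ V := by
    intro c
    by_cases hc : ∀ u ∈ c, u ∈ OpenCovers X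
    · obtain ⟨x, hx⟩ := exists_forall_nhd_selector_subset (hτ c hc)
      exact ⟨x, fun _ => hx⟩
    · exact ⟨Classical.arbitrary X, fun h => absurd h hc⟩
  choose pt hpt using this
  have : ∀ (c : List (Set (Set X))) (V : Set X), ∃ 𝒰 ∈ OpenCovers X,
      (∃ 𝒰' ∈ OpenCovers X, τ (c ++ [𝒰']) ⊆ V) → τ (c ++ [𝒰]) ⊆ V := by
    intro c V
    by_cases hV : ∃ 𝒰' ∈ OpenCovers X, τ (c ++ [𝒰']) ⊆ V
    · obtain ⟨𝒰, h𝒰, hsub⟩ := hV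
      exact ⟨𝒰, h𝒰, fun _ => hsub⟩
    · exact ⟨{univ}, ⟨by simp, by simp⟩, fun h => absurd h hV⟩
  choose cover hcover hsub using this
  exact ⟨pt, cover, hcover, fun c hc V hV hxV => hsub c V (hpt c hc V hV hxV)⟩

end OpenCovers

section Duality

variable {X : Type*} [TopologicalSpace X]

lemma twoWinsG1_openCovers_of_oneWinsPointOpen (h : OneWinsPointOpen X) :
    TwoWinsG1 (OpenCovers X) (OpenCovers X) := by
  obtain ⟨σ, hσ⟩ := h
  obtain ⟨pick, hpick⟩ := exists_selector_openCovers (X := X)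
  obtain ⟨τ, hτ⟩ := exists_strategy_of_step fun p 𝒰 => pick 𝒰 (σ p)
  refine ⟨τ, fun S hS => ?_⟩
  set U := fun n => τ (GHist S (n + 1))
  have hU : ∀ n, U n ∈ S n ∧ σ (GHist U n) ∈ U n := fun n => by
    simp only [U, hτ S n]
    exact hpick _ (hS n) _
  exact ⟨fun n => (hU n).1, hσ U fun n => ⟨(hS n).1 _ (hU n).1, (hU n).2⟩⟩

lemma twoWinsPointOpen_of_oneWinsG1_openCovers (h : OneWinsG1 (OpenCovers X) (OpenCovers X)) :
    TwoWinsPointOpen X := by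
  obtain ⟨σ, hσcov, hσ⟩ := h
  obtain ⟨pick, hpick⟩ := exists_selector_openCovers (X := X)
  obtain ⟨τ, hτ⟩ := exists_strategy_of_step fun p x => pick (σ p) x
  refine ⟨τ, fun x => ?_⟩
  set U := fun n => τ (GHist x (n + 1))
  have hU : ∀ n, U n ∈ σ (GHist U n) ∧ x n ∈ U n := fun n => by
    simp only [U, hτ x n]
    exact hpick _ (hσcov _) _
  exact ⟨fun n => ⟨(hσcov _).1 _ (hU n).1, (hU n).2⟩, hσ U fun n => (hU n).1⟩

lemma oneWinsG1_openCovers_of_twoWinsPointOpen (h : TwoWinsPointOpen X) :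
    OneWinsG1 (OpenCovers X) (OpenCovers X) := by
  obtain ⟨τ, hτ⟩ := h
  rcases isEmpty_or_nonempty X with hX | hX
  · exact ⟨fun _ => ∅, fun _ => empty_mem_openCovers, fun b hb => (hb 0).elim⟩
  have hleg : ∀ (p : List X) (x : X), IsOpen (τ (p ++ [x])) ∧ x ∈ τ (p ++ [x]) :=
    fun p x => forall_append_singleton_of_forall_GHist (Q := fun _ => True)
      (P := fun p x => IsOpen (τ (p ++ [x])) ∧ x ∈ τ (p ++ [x]))
      (fun s _ n => by rw [← GHist_succ]; exact (hτ s).1 n) (fun _ _ => trivial) trivial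
  have : ∀ (p : List X) (U : Set X), ∃ x, U ∈ range (fun y => τ (p ++ [y])) →
      U = τ (p ++ [x]) := by
    intro p U
    by_cases hU : U ∈ range (fun y => τ (p ++ [y]))
    · obtain ⟨x, rfl⟩ := hU
      exact ⟨x, fun _ => rfl⟩
    · exact ⟨Classical.arbitrary X, fun h => absurd h hU⟩
  choose pt hpt using this
  refine ⟨fun l => range fun y => τ (replies pt l ++ [y]), fun l => ?_, fun U hU => ?_⟩
  · exact ⟨by rintro _ ⟨y, rfl⟩; exact (hleg _ y).1,
      sUnion_eq_univ_iff.2 fun y => ⟨_, ⟨y, rfl⟩, (hleg _ y).2⟩⟩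
  · set x := fun k => pt (replies pt (GHist U k)) (U k)
    have hUx : U = fun n => τ (GHist x (n + 1)) := funext fun n => by
      rw [GHist_succ, ← replies_GHist]
      exact hpt _ _ (hU n)
    exact hUx ▸ (hτ x).2

lemma oneWinsPointOpen_of_twoWinsG1_openCovers (h : TwoWinsG1 (OpenCovers X) (OpenCovers X)) :
    OneWinsPointOpen X := by
  obtain ⟨τ, hτ⟩ := h
  have hX : Nonempty X := by
    by_contra! hX
    exact ((hτ (fun _ => ∅) fun _ => empty_mem_openCovers).1 0).elim
  have hleg : ∀ c : List (Set (Set X)), (∀ u ∈ c, u ∈ OpenCovers X) →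
      ∀ 𝒰 ∈ OpenCovers X, τ (c ++ [𝒰]) ∈ 𝒰 :=
    fun c hc 𝒰 h𝒰 => forall_append_singleton_of_forall_GHist
      (P := fun c 𝒰 => τ (c ++ [𝒰]) ∈ 𝒰)
      (fun S hS n => by rw [← GHist_succ]; exact (hτ S hS).1 n) hc h𝒰
  obtain ⟨pt, cover, hcover, hsub⟩ := exists_point_cover_strategy_subset hleg
  refine ⟨fun l => pt (replies cover l), fun V hV => ?_⟩
  -- the covers `S n` on which `τ` is simulated: its answer to `S n` lies inside TWO's `V n`
  set S := fun k => cover (replies cover (GHist V k)) (V k)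
  have hhist : ∀ n, replies cover (GHist V n) = GHist S n := replies_GHist cover V
  have hsubV : ∀ n, τ (GHist S (n + 1)) ⊆ V n := fun n => by
    rw [GHist_succ, ← hhist]
    refine hsub _ ?_ _ (hV n).1 (hV n).2
    rw [hhist]
    intro u hu
    obtain ⟨k, -, rfl⟩ := List.mem_ofFn.1 hu
    exact hcover _ _
  obtain ⟨-, hcov⟩ := (hτ S fun n => hcover _ _).2
  refine ⟨by rintro _ ⟨n, rfl⟩; exact (hV n).1, sUnion_eq_univ_iff.2 fun y => ?_⟩
  obtain ⟨_, ⟨n, rfl⟩, hyn⟩ := sUnion_eq_univ_iff.1 hcov y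
  exact ⟨V n, ⟨n, rfl⟩, hsubV n hyn⟩

end Duality

/-- The point-open game on `X` and the Rothberger game
`G₁(𝒪_X, 𝒪_X)` on `X` are dual games. -/
theorem statement1 (X : Type*) [TopologicalSpace X] :
    (OneWinsPointOpen X ↔ TwoWinsG1 (OpenCovers X) (OpenCovers X)) ∧
    (TwoWinsPointOpen X ↔ OneWinsG1 (OpenCovers X) (OpenCovers X)) :=
  ⟨⟨twoWinsG1_openCovers_of_oneWinsPointOpen, oneWinsPointOpen_of_twoWinsG1_openCovers⟩,
    ⟨oneWinsG1_openCovers_of_twoWinsPointOpen, twoWinsPointOpen_of_oneWinsG1_openCovers⟩⟩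
end

section
/- If X and Y are topological spaces such that ONE has a winning strategy in the point-open game on X and ONE has a winning strategy in the point-open game on Y, then ONE has a winning strategy in the point-open game on the product space X × Y. -/
open Set

open Classical in
noncomputable def extUV {X Y : Type*} [TopologicalSpace X] [TopologicalSpace Y]
    (W : Set (X × Y)) (p : X × Y) : Set X × Set Y :=
  if h : IsOpen W ∧ p ∈ W then
    ((isOpen_prod_iff.mp h.1 p.1 p.2 h.2).choose,
     (isOpen_prod_iff.mp h.1 p.1 p.2 h.2).choose_spec.choose)
  else (Set.univ, Set.univ)

lemma extUV_spec {X Y : Type*} [TopologicalSpace X] [TopologicalSpace Y]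
    {W : Set (X × Y)} {p : X × Y} (hW : IsOpen W) (hp : p ∈ W) :
    IsOpen (extUV W p).1 ∧ IsOpen (extUV W p).2 ∧ p.1 ∈ (extUV W p).1 ∧
      p.2 ∈ (extUV W p).2 ∧ (extUV W p).1 ×ˢ (extUV W p).2 ⊆ W := by
  rw [extUV, dif_pos ⟨hW, hp⟩]
  have h := (isOpen_prod_iff.mp hW p.1 p.2 hp).choose_spec.choose_spec
  exact ⟨h.1, h.2.1, h.2.2.1, h.2.2.2.1, h.2.2.2.2⟩

def idOf (n : ℕ) : Option (ℕ × Bool) :=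
  if (Nat.unpair n).1 = 0 then none
  else if ((Nat.unpair n).1 - 1) / 2 < n then
    some (((Nat.unpair n).1 - 1) / 2, ((Nat.unpair n).1 - 1) % 2 == 1)
  else none

lemma idOf_lt {n j : ℕ} {b : Bool} (h : idOf n = some (j, b)) : j < n := by
  unfold idOf at h
  split_ifs at h with h1 h2
  · simp only [Option.some.injEq, Prod.mk.injEq] at h
    obtain ⟨h, -⟩ := h
    omega

lemma idOf_zero : idOf 0 = none := by decide

lemma exists_visit (j : ℕ) (b : Bool) : ∃ n, idOf n = some (j, b) := by
  cases b with
  | false =>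
    refine ⟨Nat.pair (2 * j + 1) (j + 1), ?_⟩
    have hj : j + 1 ≤ Nat.pair (2 * j + 1) (j + 1) := Nat.right_le_pair _ _
    unfold idOf
    rw [Nat.unpair_pair]
    have h1 : (2 * j + 1 - 1 : ℕ) = 2 * j := by omega
    have h2 : 2 * j / 2 = j := by omega
    have h3 : 2 * j % 2 = 0 := by omega
    simp only [h1, h2, h3]
    rw [if_neg (by omega), if_pos (by omega)]
    rfl
  | true =>
    refine ⟨Nat.pair (2 * j + 2) (j + 1), ?_⟩
    have hj : j + 1 ≤ Nat.pair (2 * j + 2) (j + 1) := Nat.right_le_pair _ _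
    unfold idOf
    rw [Nat.unpair_pair]
    have h1 : (2 * j + 2 - 1 : ℕ) = 2 * j + 1 := by omega
    have h2 : (2 * j + 1) / 2 = j := by omega
    have h3 : (2 * j + 1) % 2 = 1 := by omega
    simp only [h1, h2, h3]
    rw [if_neg (by omega), if_pos (by omega)]
    rfl

lemma GHist_length {β : Type*} (b : ℕ → β) (n : ℕ) : (GHist b n).length = n := by
  simp [GHist]

lemma GHist_take {β : Type*} (b : ℕ → β) {j n : ℕ} (hj : j ≤ n) :
    (GHist b n).take j = GHist b j := by
  apply List.ext_getElem
  · simp [GHist]; omega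
  · intro i h1 h2
    simp [GHist, List.getElem_take]

lemma GHist_getD {β : Type*} (b : ℕ → β) {j n : ℕ} (hj : j < n) (d : β) :
    (GHist b n).getD j d = b j := by
  rw [List.getD_eq_getElem _ _ (by simp [GHist]; omega)]
  simp [GHist]

noncomputable def visit {X Y : Type*} [TopologicalSpace X] [TopologicalSpace Y]
    (σX : List (Set X) → X) (σY : List (Set Y) → Y)
    (h : List (Set (X × Y))) : List (Set X) × List (Set Y) :=
  match idOf h.length with
    | none => ([], [])
    | some (j, b) =>
    if hj : j < h.length then
      let prev := visit σX σY (h.take j)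
      let e := extUV (h.getD j Set.univ) (σX prev.1, σY prev.2)
      if b then (prev.1, prev.2 ++ [e.2]) else (prev.1 ++ [e.1], prev.2)
    else ([], [])
  termination_by h.length
  decreasing_by simp_all [List.length_take]

lemma visit_none {X Y : Type*} [TopologicalSpace X] [TopologicalSpace Y]
    (σX : List (Set X) → X) (σY : List (Set Y) → Y) (h : List (Set (X × Y)))
    (hid : idOf h.length = none) : visit σX σY h = ([], []) := by
  conv_lhs => unfold visit
  rw [hid]

lemma visit_some {X Y : Type*} [TopologicalSpace X] [TopologicalSpace Y]
    (σX : List (Set X) → X) (σY : List (Set Y) → Y) (h : List (Set (X × Y)))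
    {j : ℕ} {b : Bool} (hid : idOf h.length = some (j, b)) :
    visit σX σY h =
      (let prev := visit σX σY (h.take j)
       let e := extUV (h.getD j Set.univ) (σX prev.1, σY prev.2)
       if b then (prev.1, prev.2 ++ [e.2]) else (prev.1 ++ [e.1], prev.2)) := by
  have hj : j < h.length := idOf_lt hid
  conv_lhs => unfold visit
  rw [hid]
  dsimp only
  rw [dif_pos hj]

lemma no_escape {Z : Type*} [TopologicalSpace Z] (σ0 : List (Set Z) → Z)
    (hσ : ∀ U : ℕ → Set Z, (∀ n, IsOpen (U n) ∧ σ0 (GHist U n) ∈ U n) →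
      Set.range U ∈ OpenCovers Z)
    (x : Z) (S : ℕ → List (Set Z)) (h0 : S 0 = [])
    (hstep : ∀ k, S (k + 1) = S k ∨
      ∃ O, S (k + 1) = S k ++ [O] ∧ IsOpen O ∧ σ0 (S k) ∈ O ∧ x ∉ O)
    (hub : ∀ N, ∃ k, N ≤ (S k).length) : False := by
  classical
  have hpre : ∀ k, S k <+: S (k + 1) := by
    intro k
    rcases hstep k with h | ⟨O, h, -⟩
    · rw [h]
    · rw [h]; exact ⟨[O], rfl⟩
  have hchain : ∀ k k', k ≤ k' → S k <+: S k' := by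
    intro k k' hk
    induction k' with
    | zero =>
      have : k = 0 := by omega
      subst this; exact List.prefix_refl _
    | succ m ih =>
      rcases Nat.lt_or_ge k (m + 1) with h | h
      · exact (ih (by omega)).trans (hpre m)
      · have : k = m + 1 := by omega
        subst this; exact List.prefix_refl _
  have hgetD : ∀ k k' i, k ≤ k' → i < (S k).length →
      (S k).getD i (∅ : Set Z) = (S k').getD i ∅ := by
    intro k k' i hk hi
    obtain ⟨t, ht⟩ := hchain k k' hk
    rw [← ht, List.getD_eq_getElem _ _ hi,
      List.getD_eq_getElem _ _ (by simp; omega), List.getElem_append_left]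
  have hexists : ∀ i : ℕ, ∃ k, i + 1 ≤ (S k).length := fun i => hub (i + 1)
  set cr : ℕ → ℕ := fun i => Nat.find (hexists i) with hcrdef
  have hcr1 : ∀ i, i + 1 ≤ (S (cr i)).length := fun i => Nat.find_spec (hexists i)
  have hcr2 : ∀ i k, k < cr i → (S k).length ≤ i := by
    intro i k hk
    have := Nat.find_min (hexists i) hk
    omega
  set U' : ℕ → Set Z := fun i => (S (cr i)).getD i ∅ with hU'def
  have key : ∀ i, ∃ k, (S k).length = i ∧
      IsOpen (U' i) ∧ σ0 (S k) ∈ U' i ∧ x ∉ U' i := by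
    intro i
    have hpos : 0 < cr i := by
      by_contra hc
      have h1 := hcr1 i
      have h2 : cr i = 0 := by omega
      rw [h2, h0] at h1
      simp at h1
    obtain ⟨k, hk⟩ : ∃ k, cr i = k + 1 := ⟨cr i - 1, by omega⟩
    have hk1 : (S k).length ≤ i := hcr2 i k (by omega)
    have hk2 : i + 1 ≤ (S (k + 1)).length := by rw [← hk]; exact hcr1 i
    rcases hstep k with h | ⟨O, hSO, hO1, hO2, hO3⟩
    · exfalso; rw [h] at hk2; omega
    · have hlenk : (S k).length = i := by
        rw [hSO] at hk2; simp at hk2; omega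
      have hUi : U' i = O := by
        rw [hU'def]
        simp only
        rw [hk, hSO, ← hlenk, List.getD_append_right _ _ _ _ (le_refl _)]
        simp
      exact ⟨k, hlenk, by rw [hUi]; exact hO1, by rw [hUi]; exact hO2,
        by rw [hUi]; exact hO3⟩
  have hist : ∀ i k, (S k).length = i → GHist U' i = S k := by
    intro i k hk
    apply List.ext_getElem
    · simp [GHist, hk]
    · intro l h1 h2
      have hl : l < i := by simpa [GHist] using h1
      have hg : (GHist U' i)[l] = U' l := by simp [GHist]
      rw [hg]
      have hlcr : l < (S (cr l)).length := by have := hcr1 l; omega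
      rcases le_total (cr l) k with hle | hle
      · have heq := hgetD (cr l) k l hle hlcr
        rw [hU'def]; simp only
        rw [heq, List.getD_eq_getElem _ _ (by omega)]
      · have heq := hgetD k (cr l) l hle (by omega)
        rw [hU'def]; simp only
        rw [← heq, List.getD_eq_getElem _ _ (by omega)]
  have main : ∀ n, IsOpen (U' n) ∧ σ0 (GHist U' n) ∈ U' n := by
    intro n
    obtain ⟨k, hk1, hO1, hO2, -⟩ := key n
    exact ⟨hO1, by rw [hist n k hk1]; exact hO2⟩
  have hcov := hσ U' main
  have hx : x ∈ ⋃₀ Set.range U' := by rw [hcov.2]; trivial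
  obtain ⟨s, ⟨n, rfl⟩, hxs⟩ := hx
  obtain ⟨k, -, -, -, hnx⟩ := key n
  exact hnx hxs

noncomputable def ndF {X Y : Type*} [TopologicalSpace X] [TopologicalSpace Y]
    (σX : List (Set X) → X) (σY : List (Set Y) → Y) (W : ℕ → Set (X × Y)) (n : ℕ) :
    List (Set X) × List (Set Y) := visit σX σY (GHist W n)

noncomputable def EF {X Y : Type*} [TopologicalSpace X] [TopologicalSpace Y]
    (σX : List (Set X) → X) (σY : List (Set Y) → Y) (W : ℕ → Set (X × Y)) (n : ℕ) :
    Set X × Set Y :=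
  extUV (W n) (σX (ndF σX σY W n).1, σY (ndF σX σY W n).2)

open Classical in
noncomputable def nextF {X Y : Type*} [TopologicalSpace X] [TopologicalSpace Y]
    (σX : List (Set X) → X) (σY : List (Set Y) → Y) (W : ℕ → Set (X × Y)) (x : X)
    (n : ℕ) : ℕ :=
  if x ∈ (EF σX σY W n).1 then (exists_visit n true).choose
  else (exists_visit n false).choose

noncomputable def mF {X Y : Type*} [TopologicalSpace X] [TopologicalSpace Y]
    (σX : List (Set X) → X) (σY : List (Set Y) → Y) (W : ℕ → Set (X × Y)) (x : X)
    (k : ℕ) : ℕ := (nextF σX σY W x)^[k] 0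

lemma ndF_zero {X Y : Type*} [TopologicalSpace X] [TopologicalSpace Y]
    (σX : List (Set X) → X) (σY : List (Set Y) → Y) (W : ℕ → Set (X × Y)) :
    ndF σX σY W 0 = ([], []) := by
  unfold ndF
  exact visit_none σX σY _ (by rw [GHist_length]; exact idOf_zero)

lemma ndF_some {X Y : Type*} [TopologicalSpace X] [TopologicalSpace Y]
    (σX : List (Set X) → X) (σY : List (Set Y) → Y) (W : ℕ → Set (X × Y))
    {n j : ℕ} {b : Bool} (hid : idOf n = some (j, b)) :
    ndF σX σY W n =
      (if b then ((ndF σX σY W j).1, (ndF σX σY W j).2 ++ [(EF σX σY W j).2])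
       else ((ndF σX σY W j).1 ++ [(EF σX σY W j).1], (ndF σX σY W j).2)) := by
  have hj : j < n := idOf_lt hid
  unfold ndF
  rw [visit_some σX σY _ (by rw [GHist_length]; exact hid)]
  rw [GHist_take W hj.le, GHist_getD W hj]
  rfl

lemma nextF_spec {X Y : Type*} [TopologicalSpace X] [TopologicalSpace Y]
    (σX : List (Set X) → X) (σY : List (Set Y) → Y) (W : ℕ → Set (X × Y)) (x : X)
    (n : ℕ) :
    (x ∈ (EF σX σY W n).1 ∧ idOf (nextF σX σY W x n) = some (n, true)) ∨
    (x ∉ (EF σX σY W n).1 ∧ idOf (nextF σX σY W x n) = some (n, false)) := by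
  unfold nextF
  split_ifs with h
  · exact Or.inl ⟨h, (exists_visit n true).choose_spec⟩
  · exact Or.inr ⟨h, (exists_visit n false).choose_spec⟩

/-- If ONE has a winning strategy in the point-open game on `X` and on `Y`,
then ONE has a winning strategy in the point-open game on `X × Y`. -/
theorem statement9 {X Y : Type*} [TopologicalSpace X] [TopologicalSpace Y]
    (hX : OneWinsPointOpen X) (hY : OneWinsPointOpen Y) :
    OneWinsPointOpen (X × Y) := by
  classical
  obtain ⟨σX, hσX⟩ := hX
  obtain ⟨σY, hσY⟩ := hY
  refine ⟨fun h => (σX (visit σX σY h).1, σY (visit σX σY h).2), ?_⟩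
  intro W hW
  have hWn : ∀ n, IsOpen (W n) := fun n => (hW n).1
  have hptW : ∀ n, (σX (ndF σX σY W n).1, σY (ndF σX σY W n).2) ∈ W n :=
    fun n => (hW n).2
  have hEspec : ∀ n, IsOpen (EF σX σY W n).1 ∧ IsOpen (EF σX σY W n).2 ∧
      σX (ndF σX σY W n).1 ∈ (EF σX σY W n).1 ∧
      σY (ndF σX σY W n).2 ∈ (EF σX σY W n).2 ∧
      (EF σX σY W n).1 ×ˢ (EF σX σY W n).2 ⊆ W n :=
    fun n => extUV_spec (hWn n) (hptW n)
  refine ⟨?_, ?_⟩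
  · rintro A ⟨n, rfl⟩; exact hWn n
  · rw [Set.eq_univ_iff_forall]
    intro z
    by_contra hz
    have hzn : ∀ n, z ∉ W n := fun n hn => hz ⟨W n, ⟨n, rfl⟩, hn⟩
    have hUV : ∀ n, z.1 ∉ (EF σX σY W n).1 ∨ z.2 ∉ (EF σX σY W n).2 := by
      intro n
      by_contra hc
      push_neg at hc
      exact hzn n ((hEspec n).2.2.2.2 (Set.mem_prod.mpr ⟨hc.1, hc.2⟩))
    set m : ℕ → ℕ := mF σX σY W z.1 with hm
    have hm0 : m 0 = 0 := rfl
    have hmsucc : ∀ k, m (k + 1) = nextF σX σY W z.1 (m k) :=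
      fun k => Function.iterate_succ_apply' _ _ _
    have hstep' : ∀ k,
        (ndF σX σY W (m (k + 1)) =
            ((ndF σX σY W (m k)).1, (ndF σX σY W (m k)).2 ++ [(EF σX σY W (m k)).2]) ∧
          z.2 ∉ (EF σX σY W (m k)).2) ∨
        (ndF σX σY W (m (k + 1)) =
            ((ndF σX σY W (m k)).1 ++ [(EF σX σY W (m k)).1], (ndF σX σY W (m k)).2) ∧
          z.1 ∉ (EF σX σY W (m k)).1) := by
      intro k
      rcases nextF_spec σX σY W z.1 (m k) with ⟨hx, hid⟩ | ⟨hx, hid⟩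
      · left
        have hnd := ndF_some σX σY W
          (show idOf (m (k + 1)) = some (m k, true) by rw [hmsucc k]; exact hid)
        refine ⟨by rw [hnd]; simp, ?_⟩
        rcases hUV (m k) with h | h
        · exact absurd hx h
        · exact h
      · right
        have hnd := ndF_some σX σY W
          (show idOf (m (k + 1)) = some (m k, false) by rw [hmsucc k]; exact hid)
        exact ⟨by rw [hnd]; simp, hx⟩
    have hlen : ∀ k,
        (ndF σX σY W (m k)).1.length + (ndF σX σY W (m k)).2.length = k := by
      intro k
      induction k with
      | zero => rw [hm0, ndF_zero]; simp
      | succ k ih =>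
        rcases hstep' k with ⟨he, -⟩ | ⟨he, -⟩ <;>
          · rw [he]; simp only [List.length_append, List.length_cons,
              List.length_nil]
            omega
    have hSstep : ∀ k, (ndF σX σY W (m (k + 1))).1 = (ndF σX σY W (m k)).1 ∨
        ∃ O, (ndF σX σY W (m (k + 1))).1 = (ndF σX σY W (m k)).1 ++ [O] ∧
          IsOpen O ∧ σX ((ndF σX σY W (m k)).1) ∈ O ∧ z.1 ∉ O := by
      intro k
      rcases hstep' k with ⟨he, -⟩ | ⟨he, hx⟩
      · left; rw [he]
      · right
        exact ⟨(EF σX σY W (m k)).1, by rw [he], (hEspec (m k)).1,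
          (hEspec (m k)).2.2.1, hx⟩
    have hTstep : ∀ k, (ndF σX σY W (m (k + 1))).2 = (ndF σX σY W (m k)).2 ∨
        ∃ O, (ndF σX σY W (m (k + 1))).2 = (ndF σX σY W (m k)).2 ++ [O] ∧
          IsOpen O ∧ σY ((ndF σX σY W (m k)).2) ∈ O ∧ z.2 ∉ O := by
      intro k
      rcases hstep' k with ⟨he, hy⟩ | ⟨he, -⟩
      · right
        exact ⟨(EF σX σY W (m k)).2, by rw [he], (hEspec (m k)).2.1,
          (hEspec (m k)).2.2.2.1, hy⟩
      · left; rw [he]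
    by_cases hA : ∀ N, ∃ k, N ≤ ((ndF σX σY W (m k)).1).length
    · exact no_escape σX hσX z.1 (fun k => (ndF σX σY W (m k)).1)
        (by show (ndF σX σY W (m 0)).1 = []; rw [hm0, ndF_zero]) hSstep hA
    · push_neg at hA
      obtain ⟨N, hN⟩ := hA
      refine no_escape σY hσY z.2 (fun k => (ndF σX σY W (m k)).2)
        (by show (ndF σX σY W (m 0)).2 = []; rw [hm0, ndF_zero]) hTstep ?_
      intro N'
      refine ⟨N' + N, ?_⟩
      show N' ≤ (ndF σX σY W (m (N' + N))).2.length
      have h1 := hlen (N' + N)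
      have h2 := hN (N' + N)
      omega
end
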